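/- The curvature of the planar curve α(u) = (u, τ r sin(u/r)) at parameter u, namely κ_α(u) = |τ/r · sin(u/r)| / (1 + τ² cos²(u/r))^{3/2}, is strictly less than the curvature of its image f₁∘α on the cylinder, for every u with sin(u/r) ≠ 0, where f₁(u,v) = (r sin(u/r), v, r cos(u/r)) and 0 < τ. -/

import Mathlib

/-!
Both curves are graphs of `h(u) = τ r sin(u/r)`: `α` in the plane, `f₁ ∘ α` on the cylinder of
radius `r`. A direct computation gives `κ_α = |h''| / (1 + h'²)^{3/2}` and
`κ_{f₁∘α} = √(h''² + (1 + h'²)/r²) / (1 + h'²)^{3/2}`: wrapping the plane isometrically onto the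
cylinder keeps the geodesic curvature and adds the normal curvature of the cylinder, which vanishes
only along its rulings, and a graph over the `u`-axis is transverse to them.
-/

open Real

noncomputable def e3 (x y z : ℝ) : EuclideanSpace ℝ (Fin 3) :=
  (WithLp.equiv 2 (Fin 3 → ℝ)).symm ![x, y, z]

/-- The cylinder parameterization `f(u,v) = (r sin(u/r), v, r cos(u/r))`. -/
noncomputable def cyl (r u v : ℝ) : EuclideanSpace ℝ (Fin 3) :=
  e3 (r * Real.sin (u / r)) v (r * Real.cos (u / r))

/-- Cross product on `EuclideanSpace ℝ (Fin 3)`. -/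
noncomputable def cross3 (x y : EuclideanSpace ℝ (Fin 3)) : EuclideanSpace ℝ (Fin 3) :=
  e3 (x 1 * y 2 - x 2 * y 1) (x 2 * y 0 - x 0 * y 2) (x 0 * y 1 - x 1 * y 0)

/-- Curvature of a space curve: `‖c′ × c″‖ / ‖c′‖³`. -/
noncomputable def curvature (c : ℝ → EuclideanSpace ℝ (Fin 3)) (t : ℝ) : ℝ :=
  ‖cross3 (deriv c t) (deriv (deriv c) t)‖ / ‖deriv c t‖ ^ 3

lemma e3_apply_zero (x y z : ℝ) : e3 x y z 0 = x := rfl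
lemma e3_apply_one (x y z : ℝ) : e3 x y z 1 = y := rfl
lemma e3_apply_two (x y z : ℝ) : e3 x y z 2 = z := rfl

lemma cross3_e3 (a b c d e f : ℝ) :
    cross3 (e3 a b c) (e3 d e f) = e3 (b * f - c * e) (c * d - a * f) (a * e - b * d) := rfl

lemma norm_e3 (x y z : ℝ) : ‖e3 x y z‖ = √(x ^ 2 + y ^ 2 + z ^ 2) := by
  simp [EuclideanSpace.norm_eq, Fin.sum_univ_three, e3_apply_zero, e3_apply_one, e3_apply_two]

lemma hasDerivAt_e3 {f g h : ℝ → ℝ} {f' g' h' t : ℝ}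
    (hf : HasDerivAt f f' t) (hg : HasDerivAt g g' t) (hh : HasDerivAt h h' t) :
    HasDerivAt (fun s => e3 (f s) (g s) (h s)) (e3 f' g' h') t := by
  have hvec : HasDerivAt (fun s => ![f s, g s, h s]) ![f', g', h'] t := by
    rw [hasDerivAt_pi]
    intro i
    fin_cases i
    exacts [hf, hg, hh]
  exact ((PiLp.continuousLinearEquiv 2 ℝ (fun _ : Fin 3 => ℝ)).symm :
    (Fin 3 → ℝ) →L[ℝ] EuclideanSpace ℝ (Fin 3)).hasFDerivAt.comp_hasDerivAt t hvec

lemma sqrt_pow_three {A : ℝ} (hA : 0 ≤ A) : √A ^ 3 = A ^ ((3 : ℝ) / 2) := by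
  rw [sqrt_eq_rpow, ← rpow_natCast (A ^ ((1 : ℝ) / 2)) 3, ← rpow_mul hA]
  norm_num

lemma curvature_eq_of_hasDerivAt {c c' : ℝ → EuclideanSpace ℝ (Fin 3)}
    {a : EuclideanSpace ℝ (Fin 3)} {u : ℝ}
    (hc : ∀ t, HasDerivAt c (c' t) t) (hc' : HasDerivAt c' a u) :
    curvature c u = ‖cross3 (c' u) a‖ / ‖c' u‖ ^ 3 := by
  rw [curvature, funext fun t => (hc t).deriv, hc'.deriv]

lemma hasDerivAt_sin_div {r : ℝ} (t : ℝ) :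
    HasDerivAt (fun s => sin (s / r)) (cos (t / r) / r) t := by
  simpa [div_eq_mul_inv] using ((hasDerivAt_id' t).div_const r).sin

lemma hasDerivAt_cos_div {r : ℝ} (t : ℝ) :
    HasDerivAt (fun s => cos (s / r)) (-sin (t / r) / r) t := by
  simpa [div_eq_mul_inv] using ((hasDerivAt_id' t).div_const r).cos

lemma hasDerivAt_mul_sin_div {r : ℝ} (hr : r ≠ 0) (t : ℝ) :
    HasDerivAt (fun s => r * sin (s / r)) (cos (t / r)) t :=
  (hasDerivAt_sin_div t).const_mul r |>.congr_deriv (by field_simp)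

lemma hasDerivAt_mul_cos_div {r : ℝ} (hr : r ≠ 0) (t : ℝ) :
    HasDerivAt (fun s => r * cos (s / r)) (-sin (t / r)) t :=
  (hasDerivAt_cos_div t).const_mul r |>.congr_deriv (by field_simp)

section Graph

variable {h h' : ℝ → ℝ} {h'' u : ℝ}

theorem curvature_graph (hh : ∀ t, HasDerivAt h (h' t) t) (hh' : HasDerivAt h' h'' u) :
    curvature (fun t => e3 t (h t) 0) u = |h''| / (1 + h' u ^ 2) ^ ((3 : ℝ) / 2) := by
  rw [curvature_eq_of_hasDerivAt
      (fun t => hasDerivAt_e3 (hasDerivAt_id' t) (hh t) (hasDerivAt_const t 0))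
      (hasDerivAt_e3 (hasDerivAt_const u 1) hh' (hasDerivAt_const u 0)),
    cross3_e3, norm_e3, norm_e3, sqrt_pow_three (by positivity)]
  congr 1
  · rw [← sqrt_sq_eq_abs]
    congr 1
    ring
  · congr 1
    ring

theorem curvature_cyl_graph {r : ℝ} (hr : r ≠ 0)
    (hh : ∀ t, HasDerivAt h (h' t) t) (hh' : HasDerivAt h' h'' u) :
    curvature (fun t => cyl r t (h t)) u =
      √(h'' ^ 2 + (1 + h' u ^ 2) / r ^ 2) / (1 + h' u ^ 2) ^ ((3 : ℝ) / 2) := by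
  unfold cyl
  rw [curvature_eq_of_hasDerivAt
      (fun t => hasDerivAt_e3 (hasDerivAt_mul_sin_div hr t) (hh t) (hasDerivAt_mul_cos_div hr t))
      (hasDerivAt_e3 (hasDerivAt_cos_div u) hh' (hasDerivAt_sin_div u).neg),
    cross3_e3, norm_e3, norm_e3, sqrt_pow_three (by positivity)]
  have hpyth := sin_sq_add_cos_sq (u / r)
  congr 2
  · linear_combination
      (h'' ^ 2 + h' u ^ 2 / r ^ 2 + (sin (u / r) ^ 2 + cos (u / r) ^ 2 + 1) / r ^ 2) * hpyth
  · linear_combination hpyth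

end Graph

theorem stmt9_general (r τ : ℝ) (hr : 0 < r) (u : ℝ) :
    curvature (fun u' => e3 u' (τ * r * Real.sin (u' / r)) 0) u =
      |τ / r * Real.sin (u / r)| / (1 + τ ^ 2 * Real.cos (u / r) ^ 2) ^ ((3 : ℝ) / 2) ∧
    |τ / r * Real.sin (u / r)| / (1 + τ ^ 2 * Real.cos (u / r) ^ 2) ^ ((3 : ℝ) / 2) <
      curvature (fun u' => cyl r u' (τ * r * Real.sin (u' / r))) u := by
  have hh (t : ℝ) : HasDerivAt (fun s => τ * r * sin (s / r)) (τ * cos (t / r)) t := by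
    simpa only [mul_assoc] using (hasDerivAt_mul_sin_div hr.ne' t).const_mul τ
  have hh' : HasDerivAt (fun t => τ * cos (t / r)) (-(τ / r * sin (u / r))) u :=
    (hasDerivAt_cos_div u).const_mul τ |>.congr_deriv (by ring)
  rw [curvature_graph hh hh', curvature_cyl_graph hr.ne' hh hh', abs_neg, mul_pow]
  refine ⟨rfl, ?_⟩
  gcongr
  rw [lt_sqrt (abs_nonneg _), sq_abs, ← mul_pow]
  have : 0 < (1 + (τ * cos (u / r)) ^ 2) / r ^ 2 := by positivity
  linarith

theorem stmt9 (r τ : ℝ) (hr : 0 < r) (hτ : 0 < τ) (u : ℝ) (hu : Real.sin (u / r) ≠ 0) :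
    curvature (fun u' => e3 u' (τ * r * Real.sin (u' / r)) 0) u =
      |τ / r * Real.sin (u / r)| / (1 + τ ^ 2 * Real.cos (u / r) ^ 2) ^ ((3 : ℝ) / 2) ∧
    |τ / r * Real.sin (u / r)| / (1 + τ ^ 2 * Real.cos (u / r) ^ 2) ^ ((3 : ℝ) / 2) <
      curvature (fun u' => cyl r u' (τ * r * Real.sin (u' / r))) u :=
  stmt9_general r τ hr u
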